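/- Let A = (a_1, …, a_k) be a collection of k sequences in ℤ^ℓ with ℓ ≥ 2, and suppose two distinct columns j and j' have a common ordering permutation, i.e., there is a permutation π of {1, …, k} with a_{π(1),j} ≤ … ≤ a_{π(k),j} and a_{π(1),j'} ≤ … ≤ a_{π(k),j'}. Let A' = (a'_1, …, a'_k) be the collection of sequences of length ℓ−1 obtained from A by deleting column j' and replacing the entry in column j by a'_{i,j} = a_{i,j} + a_{i,j'}. Then OPT(A) = OPT(A'). -/

import Mathlib

/-!
The triangle inequality shows that merging the two coordinates of any centre can only decrease
its distance to every row, so `OPT(A') ≤ OPT(A)`. Conversely, a centre `x'` of `A'` with merged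
coordinate `s` is lifted by splitting `s = u + (s - u)`: the split costs nothing for row `i`
exactly when `u` lies between `a i j` and `s - a i j'`. Along the common ordering permutation the
first endpoints increase and the second decrease, so these intervals pairwise intersect and, being
intervals of a line, share a point `u`.
-/

/-- Manhattan distance between two integer sequences with coordinates indexed by `ι`. -/
def manhattanDist {ι : Type} [Fintype ι] (x y : ι → ℤ) : ℤ := ∑ j, |x j - y j|

/-- Manhattan distance from a sequence to a collection of `k` sequences. -/
def manhattanDistA {k : ℕ} {ι : Type} [Fintype ι] (hk : 0 < k) (a : Fin k → ι → ℤ)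
    (x : ι → ℤ) : ℤ :=
  Finset.univ.sup' ⟨⟨0, hk⟩, Finset.mem_univ _⟩ fun i => manhattanDist x (a i)

/-- `OPT(A)`: the optimal (minimal) distance to the collection. -/
noncomputable def manhattanOPT {k : ℕ} {ι : Type} [Fintype ι] (hk : 0 < k)
    (a : Fin k → ι → ℤ) : ℤ :=
  sInf {d : ℤ | ∃ x : ι → ℤ, manhattanDistA hk a x = d}

open Set

theorem abs_sub_add_abs_sub_of_mem_uIcc {α : Type*} [AddCommGroup α] [LinearOrder α]
    [IsOrderedAddMonoid α] {a b c : α} (h : c ∈ uIcc a b) :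
    |c - a| + |b - c| = |b - a| := by
  rcases le_total a b with hab | hab
  · rw [uIcc_of_le hab] at h
    rw [abs_of_nonneg (sub_nonneg.2 h.1), abs_of_nonneg (sub_nonneg.2 h.2),
      abs_of_nonneg (sub_nonneg.2 hab), sub_add_sub_cancel']
  · rw [uIcc_of_ge hab] at h
    rw [abs_of_nonpos (sub_nonpos.2 h.2), abs_of_nonpos (sub_nonpos.2 h.1),
      abs_of_nonpos (sub_nonpos.2 hab)]
    abel

theorem min_le_max_of_monotone_of_antitone {κ ι α : Type*} [LinearOrder κ] [LinearOrder α]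
    {f g : ι → α} (π : κ ≃ ι) (hf : Monotone (f ∘ π)) (hg : Antitone (g ∘ π)) (i t : ι) :
    min (f t) (g t) ≤ max (f i) (g i) := by
  rcases le_total (π.symm t) (π.symm i) with h | h
  · have := hf h
    simp only [Function.comp_apply, Equiv.apply_symm_apply] at this
    exact (min_le_left _ _).trans (this.trans (le_max_left _ _))
  · have := hg h
    simp only [Function.comp_apply, Equiv.apply_symm_apply] at this
    exact (min_le_right _ _).trans (this.trans (le_max_right _ _))

/-- One-dimensional Helly: pairwise intersecting intervals have a common point. -/
theorem exists_forall_mem_uIcc {ι α : Type*} [Fintype ι] [Nonempty ι] [LinearOrder α]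
    (f g : ι → α) (h : ∀ i t, min (f t) (g t) ≤ max (f i) (g i)) :
    ∃ u, ∀ i, u ∈ uIcc (f i) (g i) :=
  ⟨Finset.univ.sup' Finset.univ_nonempty fun t => min (f t) (g t), fun i =>
    ⟨Finset.le_sup' (fun t => min (f t) (g t)) (Finset.mem_univ i),
      Finset.sup'_le _ _ fun t _ => h i t⟩⟩

section Manhattan

variable {ι κ : Type} [Fintype ι] [Fintype κ] {k : ℕ} (hk : 0 < k)

theorem manhattanDist_nonneg (x y : ι → ℤ) : 0 ≤ manhattanDist x y :=
  Finset.sum_nonneg fun _ _ => abs_nonneg _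

theorem manhattanDistA_mono {a : Fin k → ι → ℤ} {b : Fin k → κ → ℤ} {x : ι → ℤ} {y : κ → ℤ}
    (h : ∀ i, manhattanDist x (a i) ≤ manhattanDist y (b i)) :
    manhattanDistA hk a x ≤ manhattanDistA hk b y :=
  Finset.sup'_mono_fun fun i _ => h i

theorem manhattanOPT_le_of_forall_exists {a : Fin k → ι → ℤ} {b : Fin k → κ → ℤ}
    (h : ∀ y, ∃ x, manhattanDistA hk a x ≤ manhattanDistA hk b y) :
    manhattanOPT hk a ≤ manhattanOPT hk b := by
  refine le_csInf ⟨_, 0, rfl⟩ ?_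
  rintro _ ⟨y, rfl⟩
  obtain ⟨x, hx⟩ := h y
  have hbdd : BddBelow {d : ℤ | ∃ x, manhattanDistA hk a x = d} := ⟨0, by
    rintro _ ⟨x, rfl⟩
    exact (manhattanDist_nonneg x (a ⟨0, hk⟩)).trans
      (Finset.le_sup' (fun i => manhattanDist x (a i)) (Finset.mem_univ _))⟩
  exact (csInf_le hbdd ⟨x, rfl⟩).trans hx

end Manhattan

section MergeColumns

variable {ι : Type} [DecidableEq ι] {j j' : ι}

def mergeCol (j j' : ι) (x : ι → ℤ) : {m // m ≠ j'} → ℤ :=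
  fun m => if (m : ι) = j then x j + x j' else x m

theorem exists_mergeCol_eq (hjj : j ≠ j') (z : {m // m ≠ j'} → ℤ) (u : ℤ) :
    ∃ x, mergeCol j j' x = z ∧ x j = u := by
  refine ⟨fun m => if h : m = j' then z ⟨j, hjj⟩ - u else if m = j then u else z ⟨m, h⟩,
    funext fun m => ?_, by simp [hjj]⟩
  by_cases hmj : (m : ι) = j
  · obtain ⟨m, hm⟩ := m
    subst hmj
    simp [mergeCol, hjj]
  · simp [mergeCol, hmj, m.2]

variable [Fintype ι]

theorem manhattanDist_mergeCol_add (hjj : j ≠ j') (x y : ι → ℤ) :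
    manhattanDist (mergeCol j j' x) (mergeCol j j' y) + |x j - y j| + |x j' - y j'| =
      manhattanDist x y + |x j + x j' - (y j + y j')| := by
  set j₀ : {m // m ≠ j'} := ⟨j, hjj⟩
  have hrest : ∑ m ∈ Finset.univ.erase j₀, |mergeCol j j' x m - mergeCol j j' y m| =
      ∑ m ∈ Finset.univ.erase j₀, |x m - y m| := by
    refine Finset.sum_congr rfl fun m hm => ?_
    have hmj : (m : ι) ≠ j := fun h => (Finset.mem_erase.1 hm).1 (Subtype.ext h)
    simp only [mergeCol, if_neg hmj]
  have hj₀ : mergeCol j j' x j₀ - mergeCol j j' y j₀ = x j + x j' - (y j + y j') := by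
    simp [mergeCol, j₀]
  unfold manhattanDist
  rw [Fintype.sum_eq_add_sum_subtype_ne _ j', ← Finset.add_sum_erase _ _ (Finset.mem_univ j₀),
    ← Finset.add_sum_erase _ _ (Finset.mem_univ j₀), hrest, hj₀]
  ring

theorem manhattanDist_mergeCol_le (hjj : j ≠ j') (x y : ι → ℤ) :
    manhattanDist (mergeCol j j' x) (mergeCol j j' y) ≤ manhattanDist x y := by
  have := manhattanDist_mergeCol_add hjj x y
  have := abs_add_le (x j - y j) (x j' - y j')
  rw [← add_sub_add_comm] at this
  linarith

theorem manhattanDist_mergeCol_eq (hjj : j ≠ j') {x y : ι → ℤ}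
    (hx : x j ∈ uIcc (y j) (x j + x j' - y j')) :
    manhattanDist (mergeCol j j' x) (mergeCol j j' y) = manhattanDist x y := by
  have := manhattanDist_mergeCol_add hjj x y
  have := abs_sub_add_abs_sub_of_mem_uIcc hx
  rw [show x j + x j' - y j' - x j = x j' - y j' by ring,
    show x j + x j' - y j' - y j = x j + x j' - (y j + y j') by ring] at this
  linarith

end MergeColumns

theorem stmt4_general {ℓ k : ℕ} (hk : 0 < k) (a : Fin k → Fin ℓ → ℤ)
    (j j' : Fin ℓ) (hjj : j ≠ j') (π : Equiv.Perm (Fin k))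
    (hmonoj : Monotone fun i => a (π i) j) (hmonoj' : Monotone fun i => a (π i) j')
    (a' : Fin k → {m : Fin ℓ // m ≠ j'} → ℤ)
    (haj : ∀ i, a' i ⟨j, hjj⟩ = a i j + a i j')
    (hao : ∀ i (m : Fin ℓ) (hm : m ≠ j'), m ≠ j → a' i ⟨m, hm⟩ = a i m) :
    manhattanOPT hk a = manhattanOPT hk a' := by
  have ha' : a' = fun i => mergeCol j j' (a i) := by
    funext i ⟨m, hm⟩
    by_cases hmj : m = j
    · subst hmj
      simp [mergeCol, haj]
    · simp [mergeCol, hmj, hao i m hm hmj]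
  subst ha'
  refine le_antisymm (manhattanOPT_le_of_forall_exists hk fun z => ?_)
    (manhattanOPT_le_of_forall_exists hk fun x =>
      ⟨mergeCol j j' x, manhattanDistA_mono hk fun i => manhattanDist_mergeCol_le hjj x (a i)⟩)
  have : Nonempty (Fin k) := ⟨⟨0, hk⟩⟩
  set s := z ⟨j, hjj⟩
  obtain ⟨u, hu⟩ := exists_forall_mem_uIcc (fun i => a i j) (fun i => s - a i j')
    (min_le_max_of_monotone_of_antitone π hmonoj fun _ _ h => sub_le_sub_left (hmonoj' h) s)
  obtain ⟨x, rfl, rfl⟩ := exists_mergeCol_eq hjj z u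
  have hs : s = x j + x j' := by simp [s, mergeCol]
  refine ⟨x, manhattanDistA_mono hk fun i => ?_⟩
  rw [manhattanDist_mergeCol_eq hjj (hs ▸ hu i)]

/-- if two distinct columns `j, j'` of the collection have a common
ordering permutation, then deleting column `j'` and adding its entries to column `j`
does not change the Manhattan consensus optimum. -/
theorem stmt4 {ℓ k : ℕ} (hℓ : 2 ≤ ℓ) (hk : 0 < k) (a : Fin k → Fin ℓ → ℤ)
    (j j' : Fin ℓ) (hjj : j ≠ j') (π : Equiv.Perm (Fin k))
    (hmonoj : Monotone fun i => a (π i) j) (hmonoj' : Monotone fun i => a (π i) j')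
    (a' : Fin k → {m : Fin ℓ // m ≠ j'} → ℤ)
    (haj : ∀ i, a' i ⟨j, hjj⟩ = a i j + a i j')
    (hao : ∀ i (m : Fin ℓ) (hm : m ≠ j'), m ≠ j → a' i ⟨m, hm⟩ = a i m) :
    manhattanOPT hk a = manhattanOPT hk a' :=
  stmt4_general hk a j j' hjj π hmonoj hmonoj' a' haj hao
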